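/- The Hamming weight distribution of the code E_10 is: 1 codeword of weight 0, 30 codewords of weight 4, 300 codewords of weight 6, 585 codewords of weight 8, 108 codewords of weight 10, and no codewords of any other weight. -/

import Mathlib

open scoped BigOperators

section Defs

variable {F : Type} [Field F] [DecidableEq F]

/-- The binary coordinate in column `j` (0-indexed), row `k`. -/
def idx (j : Fin 10) (k : Fin 4) : Fin 40 :=
  ⟨4 * j.val + k.val, by have := j.isLt; have := k.isLt; omega⟩

/-- The map φ : GF(4) → 𝔽₂⁴, 0↦0000, 1↦0011, ω↦0101, ϖ↦0110. -/
def phi (ω : F) : F → (Fin 4 → ZMod 2) := fun x =>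
  if x = 0 then ![0, 0, 0, 0]
  else if x = 1 then ![0, 0, 1, 1]
  else if x = ω then ![0, 1, 0, 1]
  else ![0, 1, 1, 0]

/-- Ĉ : the image of a quaternary code under coordinatewise φ. -/
def hatSet (ω : F) (C : Set (Fin 10 → F)) : Set (Fin 40 → ZMod 2) :=
  { v | ∃ c ∈ C, ∀ (j : Fin 10) (k : Fin 4), v (idx j k) = phi ω (c j) k }

/-- d₄¹⁰ : binary vectors of length 40 constant on each of the ten columns. -/
def d4ten : Set (Fin 40 → ZMod 2) :=
  { v | ∀ (j : Fin 10) (k k' : Fin 4), v (idx j k) = v (idx j k') }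

/-- (d₄¹⁰)₀ : the subcode of d₄¹⁰ of codewords of weight divisible by 8. -/
def d4ten0 : Set (Fin 40 → ZMod 2) :=
  { v | v ∈ d4ten ∧ 8 ∣ hammingNorm v }

/-- The generator 1000 1000 ... 1000 of e_C. -/
def eCvec : Fin 40 → ZMod 2 := fun i => if i.val % 4 = 0 then 1 else 0

/-- The generator 1000 (×9) 0111 of e_B. -/
def eBvec : Fin 40 → ZMod 2 := fun i =>
  if i.val < 36 then (if i.val % 4 = 0 then 1 else 0)
  else (if i.val % 4 = 0 then 0 else 1)

/-- ρ_C(C) = Ĉ + (d₄¹⁰)₀ + e_C. -/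
def rhoC (ω : F) (C : Set (Fin 10 → F)) : Set (Fin 40 → ZMod 2) :=
  { v | ∃ a ∈ hatSet ω C, ∃ b ∈ d4ten0,
      ∃ e ∈ ({0, eCvec} : Set (Fin 40 → ZMod 2)), v = a + b + e }

/-- ρ_B(C) = Ĉ + (d₄¹⁰)₀ + e_B. -/
def rhoB (ω : F) (C : Set (Fin 10 → F)) : Set (Fin 40 → ZMod 2) :=
  { v | ∃ a ∈ hatSet ω C, ∃ b ∈ d4ten0,
      ∃ e ∈ ({0, eBvec} : Set (Fin 40 → ZMod 2)), v = a + b + e }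

/-- The trace inner product x⋆y = Σ Tr(xᵢ ȳᵢ), computed in GF(4) (its value lies
in the prime subfield GF(2)). -/
def traceIP (x y : Fin 10 → F) : F :=
  ∑ i, ((x i * (y i) ^ 2) + (x i * (y i) ^ 2) ^ 2)

/-- The dual of an additive code with respect to the trace inner product. -/
def addDual (C : Set (Fin 10 → F)) : Set (Fin 10 → F) :=
  { x | ∀ c ∈ C, traceIP x c = 0 }

/-- The dual of a binary code of length 40 under the standard inner product. -/
def binDual (S : Set (Fin 40 → ZMod 2)) : Set (Fin 40 → ZMod 2) :=
  { x | ∀ c ∈ S, ∑ i, x i * c i = 0 }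

/-- The dual of a quaternary code under the Hermitian inner product ⟨x,y⟩ = Σ xᵢ ȳᵢ. -/
def hermDual (S : Set (Fin 10 → F)) : Set (Fin 10 → F) :=
  { x | ∀ c ∈ S, ∑ i, x i * (c i) ^ 2 = 0 }

/-- The Hermitian self-dual [10,5,4] code E₁₀ over GF(4). -/
def E10 (ω : F) : Submodule F (Fin 10 → F) :=
  Submodule.span F {![1,1,1,1,0,0,0,0,0,0], ![0,0,1,1,1,1,0,0,0,0],
    ![0,0,0,0,1,1,1,1,0,0], ![0,0,0,0,0,0,1,1,1,1],
    ![1,0,1,0,1,0,1,0,ω,ω^2]}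

/-- The Hermitian self-dual [10,5,4] code B₁₀ over GF(4). -/
def B10 (ω : F) : Submodule F (Fin 10 → F) :=
  Submodule.span F {![1,1,1,1,0,0,0,0,0,0], ![0,1,ω,ω^2,1,0,0,0,0,0],
    ![0,0,0,0,0,1,1,1,1,0], ![0,0,0,0,0,0,1,ω,ω^2,1],
    ![0,1,ω^2,ω,0,0,1,ω^2,ω,0]}

/-- Interpret a bit as an element of GF(4). -/
def b2f (x : ZMod 2) : F := if x = 1 then 1 else 0

/-- The projection 𝔽₂⁴⁰ → GF(4)¹⁰ : column j ↦ v₂ᵢₙ·1 + v·ω + v·ϖ with row labels 0,1,ω,ϖ. -/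
def Proj (ω : F) (v : Fin 40 → ZMod 2) : Fin 10 → F := fun j =>
  b2f (v (idx j 1)) * 1 + b2f (v (idx j 2)) * ω + b2f (v (idx j 3)) * ω ^ 2

/-- The parity of column j (1 = odd number of ones). -/
def colPar (v : Fin 40 → ZMod 2) (j : Fin 10) : ZMod 2 := ∑ k, v (idx j k)

/-- The parity of the top row (1 = odd number of ones). -/
def topPar (v : Fin 40 → ZMod 2) : ZMod 2 := ∑ j, v (idx j 0)

/-- The coordinate permutation of Fin 10 permuting the five blocks {2m, 2m+1}
as units according to π, preserving order within blocks. -/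
def blockPerm (π : Equiv.Perm (Fin 5)) : Fin 10 → Fin 10 := fun t =>
  ⟨2 * (π ⟨t.val / 2, by have := t.isLt; omega⟩).val + t.val % 2, by
    have := (π ⟨t.val / 2, by have := t.isLt; omega⟩).isLt; have := t.isLt; omega⟩

/-- The coordinate permutation of Fin 10 interchanging the two coordinates within
each block belonging to S, fixing all other coordinates. -/
def blockSwap (S : Finset (Fin 5)) : Fin 10 → Fin 10 := fun t =>
  if (⟨t.val / 2, by have := t.isLt; omega⟩ : Fin 5) ∈ S then
    ⟨2 * (t.val / 2) + (1 - t.val % 2), by have := t.isLt; omega⟩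
  else t

end Defs

/-!
Any field with four elements is isomorphic, via `ω ↦ A`, to the explicit model `GF4`, and the five
generators of `E₁₀` are linearly independent, so the codewords of weight `w` correspond to the
coefficient vectors `c ∈ GF4⁵` with `wt(∑ cᵢ gᵢ) = w`. The weights of these `4⁵ = 1024` words are
then enumerated by direct computation.
-/

inductive GF4 : Type
  | O | I | A | B
deriving DecidableEq

namespace GF4

instance : Fintype GF4 :=
  ⟨⟨↑[O, I, A, B], by decide⟩, fun x => by cases x <;> decide⟩

def add : GF4 → GF4 → GF4
  | O, x | x, O => x
  | I, I | A, A | B, B => O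
  | I, A | A, I => B
  | I, B | B, I => A
  | A, B | B, A => I

def mul : GF4 → GF4 → GF4
  | O, _ | _, O => O
  | I, x | x, I => x
  | A, A => B
  | B, B => A
  | A, B | B, A => I

def inv : GF4 → GF4
  | O => O
  | I => I
  | A => B
  | B => A

instance : Zero GF4 := ⟨O⟩
instance : One GF4 := ⟨I⟩
instance : Add GF4 := ⟨add⟩
instance : Mul GF4 := ⟨mul⟩
instance : Neg GF4 := ⟨id⟩
instance : Inv GF4 := ⟨inv⟩

instance : Field GF4 where
  add_assoc := by decide
  zero_add := by decide
  add_zero := by decide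
  add_comm := by decide
  neg_add_cancel := by decide
  left_distrib := by decide
  right_distrib := by decide
  zero_mul := by decide
  mul_zero := by decide
  mul_assoc := by decide
  one_mul := by decide
  mul_one := by decide
  mul_comm := by decide
  nsmul := nsmulRec
  zsmul := zsmulRec
  exists_pair_ne := ⟨O, I, by decide⟩
  mul_inv_cancel := by decide
  inv_zero := by decide
  nnqsmul := _
  qsmul := _

def embed {F : Type*} [CommRing F] (ω : F) : GF4 → F
  | O => 0
  | I => 1
  | A => ω
  | B => ω + 1

def lift {F : Type*} [CommRing F] (ω : F) (hω : ω ^ 2 = ω + 1) (h2 : (2 : F) = 0) :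
    GF4 →+* F where
  toFun := embed ω
  map_zero' := rfl
  map_one' := rfl
  map_add' x y := by
    change embed ω (add x y) = _
    cases x <;> cases y <;> simp only [add, embed] <;> grind
  map_mul' x y := by
    change embed ω (mul x y) = _
    cases x <;> cases y <;> simp only [mul, embed] <;> grind

end GF4

lemma two_eq_zero_of_card_eq_four {F : Type*} [Field F] [Fintype F] (hF : Fintype.card F = 4) :
    (2 : F) = 0 := by
  have h4 : ((4 : ℕ) : F) = 0 := hF ▸ FiniteField.cast_card_eq_zero F
  refine pow_eq_zero_iff two_ne_zero |>.mp ?_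
  linear_combination h4

noncomputable def GF4.ringEquivOfCard {F : Type*} [Field F] [Fintype F]
    (hF : Fintype.card F = 4) (ω : F) (hω : ω ^ 2 = ω + 1) : GF4 ≃+* F :=
  RingEquiv.ofBijective (GF4.lift ω hω (two_eq_zero_of_card_eq_four hF)) <|
    (Fintype.bijective_iff_injective_and_card _).mpr ⟨RingHom.injective _, hF.symm⟩

lemma LinearIndependent.natCard_span_subtype {ι R M : Type*} [Fintype ι] [Semiring R]
    [AddCommMonoid M] [Module R M] {g : ι → M} (hg : LinearIndependent R g) (p : M → Prop) :
    Nat.card {v // v ∈ Submodule.span R (Set.range g) ∧ p v} =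
      Nat.card {c : ι → R // p (∑ i, c i • g i)} := by
  refine (Nat.card_eq_of_bijective (fun c => ⟨∑ i, c.1 i • g i,
    (Submodule.mem_span_range_iff_exists_fun R).mpr ⟨c.1, rfl⟩, c.2⟩) ⟨?_, ?_⟩).symm
  · intro c d hcd
    exact Subtype.ext <| funext <|
      Fintype.linearIndependent_iffₛ.mp hg c d (congrArg Subtype.val hcd)
  · rintro ⟨v, hv, hpv⟩
    obtain ⟨c, rfl⟩ := (Submodule.mem_span_range_iff_exists_fun R).mp hv
    exact ⟨⟨c, hpv⟩, rfl⟩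

lemma Nat.card_fiber_eq_count_map {α β : Type*} [Fintype α] [DecidableEq β] (f : α → β)
    (b : β) : Nat.card {a // f a = b} = (Finset.univ.val.map f).count b := by
  simp only [eq_comm, card_eq_fintype_card, Fintype.card_subtype, Multiset.count_map]
  rfl

section E10Generators

variable {R S : Type*}

def e10Gen [Semiring R] (ω : R) : Fin 5 → Fin 10 → R :=
  ![![1, 1, 1, 1, 0, 0, 0, 0, 0, 0], ![0, 0, 1, 1, 1, 1, 0, 0, 0, 0],
    ![0, 0, 0, 0, 1, 1, 1, 1, 0, 0], ![0, 0, 0, 0, 0, 0, 1, 1, 1, 1],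
    ![1, 0, 1, 0, 1, 0, 1, 0, ω, ω ^ 2]]

def e10Word [Semiring R] (ω : R) (c : Fin 5 → R) : Fin 10 → R :=
  ∑ i, c i • e10Gen ω i

lemma E10_eq_span_range {F : Type} [Field F] (ω : F) :
    E10 ω = Submodule.span F (Set.range (e10Gen ω)) := by
  simp only [E10, e10Gen, Matrix.range_cons, Matrix.range_empty, Set.union_empty,
    Set.singleton_union]

lemma linearIndependent_e10Gen [Ring R] (ω : R) : LinearIndependent R (e10Gen ω) := by
  rw [Fintype.linearIndependent_iff]
  intro c hc
  have coord (j : Fin 10) : ∑ i, c i * e10Gen ω i j = 0 := by simpa using congrFun hc j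
  have h0 : c 0 = 0 := by simpa [Fin.sum_univ_five, e10Gen] using coord 1
  have h1 : c 1 = 0 := by simpa [Fin.sum_univ_five, e10Gen, h0] using coord 3
  have h2 : c 2 = 0 := by simpa [Fin.sum_univ_five, e10Gen, h1] using coord 5
  have h3 : c 3 = 0 := by simpa [Fin.sum_univ_five, e10Gen, h2] using coord 7
  have h4 : c 4 = 0 := by simpa [Fin.sum_univ_five, e10Gen, h0] using coord 0
  intro i
  fin_cases i <;> assumption

lemma e10Word_map [Semiring R] [Semiring S] (f : R →+* S) (ω : R) (c : Fin 5 → R) :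
    e10Word (f ω) (f ∘ c) = f ∘ e10Word ω c := by
  have hgen : ∀ i j, f (e10Gen ω i j) = e10Gen (f ω) i j := by
    intro i j
    fin_cases i <;> fin_cases j <;> simp [e10Gen]
  ext j
  simp [e10Word, Finset.sum_apply, map_sum, hgen]

lemma natCard_e10Word_weight_congr [Semiring R] [Semiring S] [DecidableEq R] [DecidableEq S]
    (e : R ≃+* S) (ω : R) (w : ℕ) :
    Nat.card {c : Fin 5 → S // hammingNorm (e10Word (e ω) c) = w} =
      Nat.card {c : Fin 5 → R // hammingNorm (e10Word ω c) = w} := by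
  refine (Nat.card_congr <|
    (Equiv.piCongrRight fun _ => e.toEquiv).subtypeEquiv fun c => ?_).symm
  change _ ↔ hammingNorm (e10Word (e ω) (e ∘ c)) = w
  rw [← RingEquiv.coe_toRingHom, e10Word_map]
  exact iff_of_eq <| congrArg (· = w)
    (hammingNorm_comp (fun _ => e) (fun _ => e.injective) (fun _ => map_zero e)).symm

end E10Generators

lemma GF4.map_hammingNorm_e10Word : (Finset.univ : Finset (Fin 5 → GF4)).val.map
    (fun c => hammingNorm (e10Word GF4.A c)) =
      Multiset.replicate 1 0 + Multiset.replicate 30 4 + Multiset.replicate 300 6 +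
        Multiset.replicate 585 8 + Multiset.replicate 108 10 := by
  decide +kernel

lemma GF4.natCard_e10Word_weight (w : ℕ) :
    Nat.card {c : Fin 5 → GF4 // hammingNorm (e10Word GF4.A c) = w} =
      if w = 0 then 1
      else if w = 4 then 30
      else if w = 6 then 300
      else if w = 8 then 585
      else if w = 10 then 108
      else 0 := by
  rw [Nat.card_fiber_eq_count_map, GF4.map_hammingNorm_e10Word]
  simp only [Multiset.count_add, Multiset.count_replicate]
  split_ifs <;> omega

/-- The weight distribution of E₁₀ is 1 + 30y⁴ + 300y⁶ + 585y⁸ + 108y¹⁰. -/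
theorem stmt_6 (F : Type) [Field F] [Fintype F] [DecidableEq F]
    (hF : Fintype.card F = 4) (ω : F) (hω : ω ^ 2 = ω + 1) :
    ∀ w : ℕ,
      Nat.card {v : Fin 10 → F // v ∈ E10 ω ∧ hammingNorm v = w} =
        if w = 0 then 1
        else if w = 4 then 30
        else if w = 6 then 300
        else if w = 8 then 585
        else if w = 10 then 108
        else 0 := by
  intro w
  rw [E10_eq_span_range, (linearIndependent_e10Gen ω).natCard_span_subtype]
  exact (natCard_e10Word_weight_congr (GF4.ringEquivOfCard hF ω hω) GF4.A w).trans
    (GF4.natCard_e10Word_weight w)
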